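/- For d ≥ 2, if G is a claw-free, d-regular graph, then α(G) ≤ 2·((d+1)/(d+2))·γ(G). -/

import Mathlib

open Finset

variable {V : Type*}

/-- A finset is independent in `G` : no two of its vertices are adjacent. -/
def IsIndepFinset (G : SimpleGraph V) (S : Finset V) : Prop :=
  ∀ u ∈ S, ∀ v ∈ S, ¬ G.Adj u v

/-- A finset dominates `G` : every vertex outside it has a neighbour inside it. -/
def IsDomFinset (G : SimpleGraph V) (D : Finset V) : Prop :=
  ∀ v, v ∉ D → ∃ u ∈ D, G.Adj u v

/-- The independence number of `G`. -/
noncomputable def indepNum [Fintype V] (G : SimpleGraph V) : ℕ :=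
  sSup {n | ∃ S : Finset V, IsIndepFinset G S ∧ S.card = n}

/-- The domination number of `G`. -/
noncomputable def domNum [Fintype V] (G : SimpleGraph V) : ℕ :=
  sInf {n | ∃ D : Finset V, IsDomFinset G D ∧ D.card = n}

/-- `G` is `K_{1,r}`-free: no vertex has `r` pairwise nonadjacent neighbours. -/
def K1rFree (G : SimpleGraph V) (r : ℕ) : Prop :=
  ¬ ∃ (v : V) (A : Finset V), (∀ a ∈ A, G.Adj v a) ∧
      (∀ a ∈ A, ∀ b ∈ A, a ≠ b → ¬ G.Adj a b) ∧ A.card = r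
/-! Count the edges between a maximum independent set `S` and its complement: each vertex of `S`
sends out `d` of them and, by claw-freeness, each outside vertex receives at most two, so
`d |S| ≤ 2 (n - |S|)`. On the other hand the closed neighbourhoods of a minimum dominating set
`D` cover the graph, so `n ≤ (d + 1) |D|`. -/

theorem card_filter_adj_lt_of_isIndepFinset {G : SimpleGraph V} [DecidableRel G.Adj] {r : ℕ}
    (hG : K1rFree G r) {S : Finset V} (hS : IsIndepFinset G S) (v : V) :
    #{s ∈ S | G.Adj s v} < r := by
  by_contra! hr
  obtain ⟨A, hAS, hA⟩ := exists_subset_card_eq hr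
  refine hG ⟨v, A, fun a ha => (mem_filter.mp (hAS ha)).2.symm, fun a ha b hb _ => ?_, hA⟩
  exact hS a (mem_filter.mp (hAS ha)).1 b (mem_filter.mp (hAS hb)).1

section

variable [Fintype V] (G : SimpleGraph V)

theorem exists_isIndepFinset_card_eq_indepNum :
    ∃ S : Finset V, IsIndepFinset G S ∧ #S = indepNum G :=
  Nat.sSup_mem (s := {n | ∃ S : Finset V, IsIndepFinset G S ∧ #S = n})
    ⟨0, ∅, fun _ h => absurd h (notMem_empty _), card_empty⟩
    ⟨Fintype.card V, by rintro _ ⟨S, -, rfl⟩; exact S.card_le_univ⟩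

theorem exists_isDomFinset_card_eq_domNum :
    ∃ D : Finset V, IsDomFinset G D ∧ #D = domNum G :=
  Nat.sInf_mem (s := {n | ∃ D : Finset V, IsDomFinset G D ∧ #D = n})
    ⟨_, univ, fun v hv => absurd (mem_univ v) hv, rfl⟩

variable {G} [DecidableRel G.Adj]

theorem IsIndepFinset.card_mul_le_card_compl_mul [DecidableEq V] {r d : ℕ}
    (hG : K1rFree G (r + 1)) (hdeg : ∀ v, d ≤ G.degree v) {S : Finset V}
    (hS : IsIndepFinset G S) : #S * d ≤ #Sᶜ * r := by
  refine card_mul_le_card_mul G.Adj (fun s hs => ?_) (fun v _ =>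
    Nat.lt_succ_iff.mp (card_filter_adj_lt_of_isIndepFinset hG hS v))
  have hnbr : Sᶜ.bipartiteAbove G.Adj s = G.neighborFinset s := by
    ext v
    simp only [mem_bipartiteAbove, mem_compl, SimpleGraph.mem_neighborFinset,
      and_iff_right_iff_imp]
    exact fun hsv hv => hS s hs v hv hsv
  rw [hnbr, G.card_neighborFinset_eq_degree]
  exact hdeg s

theorem IsDomFinset.card_le_mul_card {d : ℕ} (hdeg : ∀ v, G.degree v ≤ d) {D : Finset V}
    (hD : IsDomFinset G D) : Fintype.card V ≤ (d + 1) * #D := by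
  classical
  have hcover : univ ⊆ D.biUnion fun u => insert u (G.neighborFinset u) := by
    intro v _
    by_cases hv : v ∈ D
    · exact mem_biUnion.mpr ⟨v, hv, mem_insert_self _ _⟩
    · obtain ⟨u, hu, huv⟩ := hD v hv
      exact mem_biUnion.mpr ⟨u, hu, mem_insert_of_mem ((G.mem_neighborFinset u v).mpr huv)⟩
  have hclosed : ∀ u ∈ D, #(insert u (G.neighborFinset u)) ≤ d + 1 := fun u _ =>
    (card_insert_le _ _).trans <| by
      rw [G.card_neighborFinset_eq_degree]; exact Nat.succ_le_succ (hdeg u)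
  calc Fintype.card V ≤ #(D.biUnion fun u => insert u (G.neighborFinset u)) :=
        card_le_card hcover
    _ ≤ #D * (d + 1) := card_biUnion_le_card_mul _ _ _ hclosed
    _ = (d + 1) * #D := mul_comm _ _

end

theorem stmt6_general [Fintype V] (G : SimpleGraph V) [DecidableRel G.Adj] (d : ℕ)
    (hreg : G.IsRegularOfDegree d) (hG : K1rFree G 3) :
    (d + 2) * indepNum G ≤ 2 * (d + 1) * domNum G := by
  classical
  obtain ⟨S, hS, hSα⟩ := exists_isIndepFinset_card_eq_indepNum G
  obtain ⟨D, hD, hDγ⟩ := exists_isDomFinset_card_eq_domNum G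
  have hedges : #S * d ≤ #Sᶜ * 2 := hS.card_mul_le_card_compl_mul hG (fun v => (hreg v).ge)
  have hcover : Fintype.card V ≤ (d + 1) * #D := hD.card_le_mul_card fun v => (hreg v).le
  rw [← hSα, ← hDγ]
  calc (d + 2) * #S = #S * d + 2 * #S := by ring
    _ ≤ 2 * (#Sᶜ + #S) := by linarith
    _ = 2 * Fintype.card V := by rw [card_compl_add_card]
    _ ≤ 2 * (d + 1) * #D := by linarith

/-- For d ≥ 2, a claw-free d-regular graph satisfies
α(G) ≤ 2·((d+1)/(d+2))·γ(G), i.e. (d+2)·α(G) ≤ 2(d+1)·γ(G). -/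
theorem stmt6 [Fintype V] (G : SimpleGraph V) [DecidableRel G.Adj] (d : ℕ) (hd : 2 ≤ d)
    (hreg : G.IsRegularOfDegree d) (hG : K1rFree G 3) :
    (d + 2) * indepNum G ≤ 2 * (d + 1) * domNum G :=
  stmt6_general G d hreg hG
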